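/- In the Cartesian product P₅ □ P of the path on 5 vertices with the Petersen graph, the radio number equals 126. -/

import Mathlib

open SimpleGraph Finset

/-- The Petersen graph as the Kneser graph K(5,2). -/
def petersen : SimpleGraph {s : Finset (Fin 5) // s.card = 2} where
  Adj a b := Disjoint a.1 b.1
  symm := ⟨fun _ _ h => h.symm⟩
  loopless := ⟨fun a h => by
    have h0 : a.1 = ⊥ := disjoint_self.mp h
    have h2 := a.2
    rw [h0] at h2
    simp at h2⟩

/-- A radio labeling of `G`: for all distinct `u, v`,
`d(u,v) + |φ(u) - φ(v)| ≥ diam(G) + 1`. -/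
def IsRadioLabeling {V : Type*} (G : SimpleGraph V) (φ : V → ℕ) : Prop :=
  ∀ u v : V, u ≠ v → (G.diam : ℤ) + 1 ≤ (G.dist u v : ℤ) + |(φ u : ℤ) - (φ v : ℤ)|

/-- The span of a labeling: the maximum difference between two labels. -/
noncomputable def span {V : Type*} (φ : V → ℕ) : ℕ :=
  sSup (Set.range fun p : V × V => φ p.1 - φ p.2)

/-- The radio number of `G`: the minimum span over all radio labelings. -/
noncomputable def radioNumber {V : Type*} (G : SimpleGraph V) : ℕ :=
  sInf {s | ∃ φ : V → ℕ, IsRadioLabeling G φ ∧ span φ = s}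

/-- `d(v, S)`: the minimum distance from `v` to a vertex of `S`. -/
noncomputable def distToSet {V : Type*} (G : SimpleGraph V) (v : V) (S : Finset V) : ℕ :=
  sInf ((fun w => G.dist v w) '' ↑S)

/-- `diam(S)`: the maximum distance in `G` between two vertices of `S`. -/
noncomputable def setDiam {V : Type*} (G : SimpleGraph V) (S : Finset V) : ℕ :=
  sSup {d | ∃ x ∈ S, ∃ y ∈ S, G.dist x y = d}

/-!
List the vertices of `P₅ □ P` in increasing order of their labels. Since the Petersen graph has
diameter 2, two consecutive vertices on levels `i, j` of `P₅` are at distance at most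
`|i - j| + 2 ≤ a i + a j + 2`, where `a = midDist` is the distance to the middle level, so
consecutive labels differ by at least `5 - a i - a j`. Summing, the span is at least
`125 + a first + a last`. Equality would put the first and last vertex on the middle level and make
every step tight. An end-level vertex between two tight steps then has a middle-level vertex on one
side, since otherwise its two neighbours in the sequence would violate the radio condition with
each other. The 20 end-level vertices would thus need 20 slots next to the 10 middle-level
vertices, which offer only `2 · 10 - 2`. So the span is at least 126, and `radioLabel` attains it.
-/

namespace SimpleGraph

variable {α β : Type*} {G : SimpleGraph α} {H : SimpleGraph β}

lemma Connected.dist_boxProd (hG : G.Connected) (hH : H.Connected) (x y : α × β) :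
    (G □ H).dist x y = G.dist x.1 y.1 + H.dist x.2 y.2 := by
  rw [dist, edist_boxProd, ENat.toNat_add (edist_ne_top_iff_reachable.mpr (hG.preconnected _ _))
    (edist_ne_top_iff_reachable.mpr (hH.preconnected _ _)), dist, dist]

lemma pathGraph_natAbs_sub_le_length {n : ℕ} {i j : Fin n} (w : (pathGraph n).Walk i j) :
    ((i : ℤ) - j).natAbs ≤ w.length := by
  induction w with
  | nil => simp
  | cons h _ ih =>
    rw [Walk.length_cons]
    rcases pathGraph_adj.mp h with h | h <;> omega

lemma pathGraph_dist_le_of_val_eq_add {n : ℕ} (k : ℕ) :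
    ∀ i j : Fin n, (j : ℕ) = i + k → (pathGraph n).dist i j ≤ k := by
  induction k with
  | zero => intro i j h; simp [Fin.ext (h.trans (add_zero _))]
  | succ k ih =>
    intro i j h
    let j' : Fin n := ⟨i + k, by omega⟩
    have hadj : (pathGraph n).Adj j' j := pathGraph_adj.mpr (.inl (by simp [j', h]; omega))
    calc (pathGraph n).dist i j ≤ (pathGraph n).dist i j' + (pathGraph n).dist j' j :=
          (pathGraph_preconnected n i j').dist_triangle_left j
      _ ≤ k + 1 := add_le_add (ih i j' rfl) (dist_eq_one_iff_adj.mpr hadj).le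

lemma pathGraph_dist {n : ℕ} (i j : Fin n) : (pathGraph n).dist i j = ((i : ℤ) - j).natAbs := by
  obtain ⟨w, hw⟩ := (pathGraph_preconnected n i j).exists_walk_length_eq_dist
  refine le_antisymm ?_ (hw ▸ pathGraph_natAbs_sub_le_length w)
  rcases le_total i j with h | h
  · exact (pathGraph_dist_le_of_val_eq_add (j - i : ℕ) i j (by omega)).trans_eq (by omega)
  · exact dist_comm.trans_le <|
      (pathGraph_dist_le_of_val_eq_add (i - j : ℕ) j i (by omega)).trans_eq (by omega)

end SimpleGraph

lemma card_filter_add_two_le_two_mul {p q : ℕ → Prop} [DecidablePred p] [DecidablePred q]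
    {M : ℕ} (h0 : q 0) (hM : q M)
    (hpq : ∀ j ≤ M, p j → (0 < j ∧ q (j - 1)) ∨ (j < M ∧ q (j + 1))) :
    #{j ∈ range (M + 1) | p j} + 2 ≤ 2 * #{j ∈ range (M + 1) | q j} := by
  set S := {j ∈ range (M + 1) | q j}
  have hsub : {j ∈ range (M + 1) | p j} ⊆
      (S.erase M).image (· + 1) ∪ (S.erase 0).image (· - 1) := by
    intro j hj
    simp only [mem_filter, mem_range] at hj
    rcases hpq j (by omega) hj.2 with ⟨hj0, hq⟩ | ⟨hjM, hq⟩
    · exact mem_union_left _ (mem_image.mpr ⟨j - 1, by simp [S, hq]; omega, by omega⟩)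
    · exact mem_union_right _ (mem_image.mpr ⟨j + 1, by simp [S, hq]; omega, by omega⟩)
  have hM' : M ∈ S := by simp [S, hM]
  have h0' : 0 ∈ S := by simp [S, h0]
  have hright := card_image_le (s := S.erase M) (f := (· + 1))
  have hleft := card_image_le (s := S.erase 0) (f := (· - 1))
  rw [card_erase_of_mem hM'] at hright
  rw [card_erase_of_mem h0'] at hleft
  have := (card_le_card hsub).trans (card_union_le _ _)
  have : 1 ≤ #S := card_pos.mpr ⟨0, h0'⟩
  omega

lemma exists_equiv_fin_strictMono {V : Type*} [Fintype V] {N : ℕ} (hN : Fintype.card V = N)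
    {φ : V → ℕ} (hφ : Function.Injective φ) : ∃ e : Fin N ≃ V, StrictMono (φ ∘ e) := by
  let e₀ : Fin N ≃ V := (Fintype.equivFinOfCardEq hN).symm
  refine ⟨(Tuple.sort (φ ∘ e₀)).trans e₀, ?_⟩
  exact (Tuple.monotone_sort (φ ∘ e₀)).strictMono_of_injective
    (hφ.comp (e₀.injective.comp (Tuple.sort _).injective))

lemma sum_range_comp_equiv {V M : Type*} [Fintype V] [AddCommMonoid M] {N : ℕ} [NeZero N]
    (e : Fin N ≃ V) (g : V → M) : ∑ n ∈ range N, g (e (Fin.ofNat N n)) = ∑ v, g v := by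
  rw [← Fin.sum_univ_eq_sum_range (fun n => g (e (Fin.ofNat N n)))]
  simp only [Fin.ofNat_val_eq_self]
  exact e.sum_comp g

lemma card_filter_range_comp_equiv {V : Type*} [Fintype V] {N : ℕ} [NeZero N]
    (e : Fin N ≃ V) (p : V → Prop) [DecidablePred p] :
    #{n ∈ range N | p (e (Fin.ofNat N n))} = #{v | p v} := by
  simp only [card_filter]
  exact sum_range_comp_equiv e fun v => if p v then 1 else 0

lemma sub_le_span {V : Type*} [Finite V] (φ : V → ℕ) (u v : V) : φ u - φ v ≤ span φ :=
  le_csSup (Set.finite_range _).bddAbove ⟨(u, v), rfl⟩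

lemma span_eq_of_forall_le {V : Type*} {φ : V → ℕ} {m : ℕ} (hle : ∀ v, φ v ≤ m) {u v : V}
    (hu : φ u = m) (hv : φ v = 0) : span φ = m :=
  IsGreatest.csSup_eq ⟨⟨(u, v), by simp [hu, hv]⟩,
    by rintro _ ⟨p, rfl⟩; exact (Nat.sub_le _ _).trans (hle _)⟩

def midDist (i : Fin 5) : ℤ := |(i : ℤ) - 2|

lemma midDist_nonneg (i : Fin 5) : 0 ≤ midDist i := abs_nonneg _

lemma abs_sub_le_midDist_add (i j : Fin 5) : |(i : ℤ) - j| ≤ midDist i + midDist j := by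
  simpa [midDist, abs_sub_comm (2 : ℤ)] using abs_sub_le (i : ℤ) 2 j

lemma midDist_eq_zero_or_of_tight : ∀ x y z : Fin 5, midDist y = 2 →
    |(x : ℤ) - y| = midDist x + midDist y → |(y : ℤ) - z| = midDist y + midDist z →
    midDist x + midDist z - 1 ≤ |(x : ℤ) - z| → midDist x = 0 ∨ midDist z = 0 := by
  decide

section LevelSequence

variable (x : ℕ → Fin 5) (F : ℕ → ℤ)

def slack (i : ℕ) : ℤ := (F (i + 1) - F i) - (5 - midDist (x i) - midDist (x (i + 1)))

variable {x F}

lemma slack_nonneg {i : ℕ} (h : 5 ≤ |(x i : ℤ) - x (i + 1)| + (F (i + 1) - F i)) :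
    0 ≤ slack x F i := by
  have := abs_sub_le_midDist_add (x i) (x (i + 1))
  unfold slack
  linarith

lemma sub_eq_sum_slack (M : ℕ) :
    F M - F 0 = 5 * M - 2 * ∑ n ∈ range (M + 1), midDist (x n) + midDist (x 0) + midDist (x M)
      + ∑ i ∈ range M, slack x F i := by
  induction M with
  | zero => simp; ring
  | succ M ih =>
    rw [sum_range_succ (fun n => midDist (x n)) (M + 1), sum_range_succ (slack x F) M, slack]
    push_cast
    linarith

lemma abs_sub_eq_midDist_add_of_slack_eq_zero {i : ℕ} (hi : slack x F i = 0)
    (h : 5 ≤ |(x i : ℤ) - x (i + 1)| + (F (i + 1) - F i)) :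
    |(x i : ℤ) - x (i + 1)| = midDist (x i) + midDist (x (i + 1)) := by
  have := abs_sub_le_midDist_add (x i) (x (i + 1))
  unfold slack at hi
  linarith

lemma midDist_eq_zero_or_of_slack_eq_zero {m : ℕ} (hm : slack x F m = 0)
    (hm' : slack x F (m + 1) = 0) (hend : midDist (x (m + 1)) = 2)
    (hgap : ∀ i j, m ≤ i → i < j → j ≤ m + 2 → 5 ≤ |(x i : ℤ) - x j| + (F j - F i)) :
    midDist (x m) = 0 ∨ midDist (x (m + 2)) = 0 := by
  have h01 := abs_sub_eq_midDist_add_of_slack_eq_zero hm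
    (hgap m (m + 1) le_rfl (by omega) (by omega))
  have h12 := abs_sub_eq_midDist_add_of_slack_eq_zero hm'
    (hgap (m + 1) (m + 2) (by omega) (by omega) le_rfl)
  have h02 := hgap m (m + 2) le_rfl (by omega) le_rfl
  unfold slack at hm hm'
  exact midDist_eq_zero_or_of_tight (x m) (x (m + 1)) (x (m + 2)) hend h01 h12 (by linarith)

theorem lt_sub_of_two_mul_card_midDist_lt {M : ℕ}
    (hgap : ∀ m n, m < n → n ≤ M → 5 ≤ |(x m : ℤ) - x n| + (F n - F m))
    (hcard : 2 * #{n ∈ range (M + 1) | midDist (x n) = 0} <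
      #{n ∈ range (M + 1) | midDist (x n) = 2} + 2) :
    5 * M - 2 * ∑ n ∈ range (M + 1), midDist (x n) < F M - F 0 := by
  by_contra! hle
  have hslack (i : ℕ) (hi : i ∈ range M) : 0 ≤ slack x F i :=
    slack_nonneg (hgap i (i + 1) (by omega) (by simp at hi; omega))
  have hsum := sub_eq_sum_slack (x := x) (F := F) M
  have hsum_nonneg := sum_nonneg hslack
  have ha0 := midDist_nonneg (x 0)
  have haM := midDist_nonneg (x M)
  have h0 : midDist (x 0) = 0 := by linarith
  have hM : midDist (x M) = 0 := by linarith
  have htight : ∀ i ∈ range M, slack x F i = 0 :=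
    (sum_eq_zero_iff_of_nonneg hslack).mp (by linarith)
  have hends (j : ℕ) (hj : j ≤ M) (hend : midDist (x j) = 2) :
      (0 < j ∧ midDist (x (j - 1)) = 0) ∨ (j < M ∧ midDist (x (j + 1)) = 0) := by
    obtain ⟨m, rfl⟩ : ∃ m, j = m + 1 :=
      Nat.exists_eq_add_one.mpr (Nat.pos_of_ne_zero fun h => by simp [h, h0] at hend)
    have hmM : m + 2 ≤ M := by
      by_contra
      have : m + 1 = M := by omega
      simp [this, hM] at hend
    rcases midDist_eq_zero_or_of_slack_eq_zero (htight m (by simp; omega))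
      (htight (m + 1) (by simp; omega)) hend (fun i j _ hij hj => hgap i j hij (by omega))
      with h | h
    · exact .inl ⟨m.succ_pos, h⟩
    · exact .inr ⟨by omega, h⟩
  have := card_filter_add_two_le_two_mul (p := fun n => midDist (x n) = 2)
    (q := fun n => midDist (x n) = 0) h0 hM hends
  omega

end LevelSequence

abbrev PetersenVertex := {s : Finset (Fin 5) // s.card = 2}

instance : DecidableRel petersen.Adj := fun a b => inferInstanceAs (Decidable (Disjoint a.1 b.1))

instance : Nonempty PetersenVertex := ⟨⟨{0, 1}, rfl⟩⟩

lemma petersen_exists_common_adj : ∀ a b : PetersenVertex, a ≠ b → ¬ petersen.Adj a b →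
    ∃ c, petersen.Adj a c ∧ petersen.Adj c b := by
  decide

lemma petersen_connected : petersen.Connected := .mk fun a b => by
  by_cases hab : a = b
  · exact hab ▸ .rfl
  by_cases hadj : petersen.Adj a b
  · exact hadj.reachable
  obtain ⟨c, hac, hcb⟩ := petersen_exists_common_adj a b hab hadj
  exact hac.reachable.trans hcb.reachable

def petersenDist (a b : PetersenVertex) : ℕ :=
  if a = b then 0 else if petersen.Adj a b then 1 else 2

lemma petersen_dist (a b : PetersenVertex) : petersen.dist a b = petersenDist a b := by
  unfold petersenDist
  split_ifs with hab hadj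
  · simp [hab]
  · exact dist_eq_one_iff_adj.mpr hadj
  · obtain ⟨c, hac, hcb⟩ := petersen_exists_common_adj a b hab hadj
    have hle : petersen.dist a b ≤ 2 := dist_le (.cons hac (.cons hcb .nil))
    have hpos : 0 < petersen.dist a b := petersen_connected.pos_dist_of_ne hab
    have hne1 : petersen.dist a b ≠ 1 := fun h => hadj (dist_eq_one_iff_adj.mp h)
    omega

abbrev pathPetersen := pathGraph 5 □ petersen

def pathPetersenDist (u v : Fin 5 × PetersenVertex) : ℕ :=
  ((u.1 : ℤ) - v.1).natAbs + petersenDist u.2 v.2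

lemma pathPetersen_dist (u v : Fin 5 × PetersenVertex) :
    pathPetersen.dist u v = pathPetersenDist u v := by
  rw [(pathGraph_connected 4).dist_boxProd petersen_connected, pathGraph_dist, petersen_dist]
  rfl

lemma pathPetersenDist_le_six : ∀ u v, pathPetersenDist u v ≤ 6 := by decide

lemma pathPetersen_diam : pathPetersen.diam = 6 := by
  obtain ⟨u, v, huv⟩ := pathPetersen.exists_dist_eq_diam
  refine le_antisymm (huv ▸ pathPetersen_dist u v ▸ pathPetersenDist_le_six u v) ?_
  have hfar : pathPetersenDist (0, ⟨{0, 1}, rfl⟩) (4, ⟨{0, 2}, rfl⟩) = 6 := by decide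
  rw [← hfar, ← pathPetersen_dist]
  exact dist_le_diam (connected_iff_ediam_ne_top.mp
    ((pathGraph_connected 4).boxProd petersen_connected))

lemma sum_midDist_fst : ∑ v : Fin 5 × PetersenVertex, midDist v.1 = 60 := by decide

lemma card_midDist_fst_eq_zero : #{v : Fin 5 × PetersenVertex | midDist v.1 = 0} = 10 := by
  decide

lemma card_midDist_fst_eq_two : #{v : Fin 5 × PetersenVertex | midDist v.1 = 2} = 20 := by
  decide

lemma IsRadioLabeling.five_le_abs_sub_add_abs_sub {φ : Fin 5 × PetersenVertex → ℕ}
    (hφ : IsRadioLabeling pathPetersen φ) {u v : Fin 5 × PetersenVertex} (huv : u ≠ v) :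
    5 ≤ |(u.1 : ℤ) - v.1| + |(φ u : ℤ) - φ v| := by
  have h := hφ u v huv
  have hP : petersenDist u.2 v.2 ≤ 2 := by unfold petersenDist; split_ifs <;> omega
  rw [pathPetersen_diam, pathPetersen_dist, pathPetersenDist, Nat.cast_add,
    Int.natCast_natAbs] at h
  push_cast at h
  omega

theorem IsRadioLabeling.exists_126_le_sub {φ : Fin 5 × PetersenVertex → ℕ}
    (hφ : IsRadioLabeling pathPetersen φ) : ∃ u v, 126 ≤ φ u - φ v := by
  have hinj : Function.Injective φ := fun u v h => by
    by_contra huv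
    have := hφ.five_le_abs_sub_add_abs_sub huv
    rw [h, sub_self, abs_zero] at this
    have : |(u.1 : ℤ) - v.1| < 5 := abs_sub_lt_iff.mpr ⟨by omega, by omega⟩
    omega
  obtain ⟨e, he⟩ := exists_equiv_fin_strictMono (N := 50) rfl hinj
  have hlt {m n : ℕ} (hmn : m < n) (hn : n ≤ 49) :
      φ (e (Fin.ofNat 50 m)) < φ (e (Fin.ofNat 50 n)) :=
    he (by simp only [Fin.lt_def, Fin.val_ofNat]; omega)
  have key := lt_sub_of_two_mul_card_midDist_lt (x := fun n => (e (Fin.ofNat 50 n)).1)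
    (F := fun n => φ (e (Fin.ofNat 50 n))) (M := 49) (fun m n hmn hn => by
      have h5 := hφ.five_le_abs_sub_add_abs_sub (ne_of_apply_ne φ (hlt hmn hn).ne)
      have hpos : (φ (e (Fin.ofNat 50 m)) : ℤ) < φ (e (Fin.ofNat 50 n)) := by
        exact_mod_cast hlt hmn hn
      rw [abs_of_neg (sub_neg.mpr hpos)] at h5
      linarith) (by
      rw [card_filter_range_comp_equiv e (fun v => midDist v.1 = 0),
        card_filter_range_comp_equiv e (fun v => midDist v.1 = 2), card_midDist_fst_eq_zero,
        card_midDist_fst_eq_two]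
      norm_num)
  rw [sum_range_comp_equiv e (fun v => midDist v.1), sum_midDist_fst] at key
  exact ⟨e 49, e 0, by push_cast at key; omega⟩

/-- Row `i` lists the labels on level `i` of `P₅`; the column of the Petersen vertex `{a, b}`
is `2 ^ a + 2 ^ b`. -/
def labelTable : Fin 5 → ℕ → ℕ
  | 0, 3 => 94 | 0, 5 => 81 | 0, 6 => 42 | 0, 9 => 107 | 0, 10 => 68
  | 0, 12 => 29 | 0, 17 => 16 | 0, 18 => 3 | 0, 20 => 55 | 0, 24 => 116
  | 1, 3 => 60 | 1, 5 => 99 | 1, 6 => 21 | 1, 9 => 34 | 1, 10 => 8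
  | 1, 12 => 112 | 1, 17 => 73 | 1, 18 => 47 | 1, 20 => 121 | 1, 24 => 86
  | 2, 3 => 104 | 2, 5 => 52 | 2, 6 => 91 | 2, 9 => 26 | 2, 10 => 39
  | 2, 12 => 78 | 2, 17 => 126 | 2, 18 => 13 | 2, 20 => 0 | 2, 24 => 65
  | 3, 3 => 70 | 3, 5 => 18 | 3, 6 => 5 | 3, 9 => 96 | 3, 10 => 31
  | 3, 12 => 118 | 3, 17 => 83 | 3, 18 => 57 | 3, 20 => 44 | 3, 24 => 109
  | 4, 3 => 10 | 4, 5 => 114 | 4, 6 => 49 | 4, 9 => 62 | 4, 10 => 23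
  | 4, 12 => 36 | 4, 17 => 101 | 4, 18 => 123 | 4, 20 => 88 | 4, 24 => 75
  | _, _ => 0

def radioLabel (v : Fin 5 × PetersenVertex) : ℕ := labelTable v.1 (∑ k ∈ v.2.1, 2 ^ k.val)

set_option maxRecDepth 100000 in
lemma radioLabel_separated :
    ∀ u v, u ≠ v → 7 ≤ pathPetersenDist u v + ((radioLabel u : ℤ) - radioLabel v).natAbs := by
  decide

lemma radioLabel_le : ∀ v, radioLabel v ≤ 126 := by decide

lemma isRadioLabeling_radioLabel : IsRadioLabeling pathPetersen radioLabel := by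
  intro u v huv
  rw [pathPetersen_diam, pathPetersen_dist, ← Int.natCast_natAbs]
  exact_mod_cast radioLabel_separated u v huv

lemma span_radioLabel : span radioLabel = 126 :=
  span_eq_of_forall_le radioLabel_le (u := (2, ⟨{0, 4}, rfl⟩)) (v := (2, ⟨{2, 4}, rfl⟩)) rfl rfl

theorem stmt_18 : radioNumber (pathGraph 5 □ petersen) = 126 := by
  have hmem : 126 ∈ {s | ∃ φ, IsRadioLabeling pathPetersen φ ∧ span φ = s} :=
    ⟨radioLabel, isRadioLabeling_radioLabel, span_radioLabel⟩
  refine le_antisymm (Nat.sInf_le hmem) (le_csInf ⟨_, hmem⟩ ?_)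
  rintro _ ⟨φ, hφ, rfl⟩
  obtain ⟨u, v, h⟩ := hφ.exists_126_le_sub
  exact h.trans (sub_le_span φ u v)
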